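/- arXiv:1711.10220 — 7 statements merged into one kernel-verified Lean document; each statement's English description precedes it below -/
import Mathlib

section
/- For every real number x that is not an integer multiple of 2π, the series ∑_{n∈ℤ} 1/(x - 2πn)² converges and equals 1/(2(1 - cos x)). -/
/-! Parseval's identity for `t ↦ exp (i x t)` on `[0, 1]`: its `n`-th Fourier coefficient is
`(exp (i x) - 1) / (i (x - 2πn))`, of squared modulus `2 (1 - cos x) / (x - 2πn) ^ 2`, while its
squared `L²` norm is `1`. -/

open Real Complex MeasureTheory

lemma norm_exp_ofReal_mul_I_sub_one_sq (θ : ℝ) :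
    ‖cexp (θ * I) - 1‖ ^ 2 = 2 * (1 - Real.cos θ) := by
  simp only [mul_comm _ I, norm_exp_I_mul_ofReal_sub_one, norm_mul, Real.norm_eq_abs, mul_pow,
    sq_abs, Real.sin_sq_eq_half_sub, mul_div_cancel₀ θ two_ne_zero]
  norm_num
  ring

lemma memLp_exp_ofReal_mul_I (x : ℝ) (p : ENNReal) (a b : ℝ) :
    MemLp (fun t : ℝ => cexp (x * t * I)) p (volume.restrict (Set.Ioc a b)) :=
  MemLp.of_bound (by fun_prop) 1 (Filter.Eventually.of_forall fun t => by simp [Complex.norm_exp])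

lemma fourierCoeffOn_exp_ofReal_mul_I (x : ℝ) (n : ℤ) (hxn : x ≠ 2 * π * n) :
    fourierCoeffOn zero_lt_one (fun t : ℝ => cexp (x * t * I)) n =
      (cexp ((x - 2 * π * n : ℝ) * I) - 1) / ((x - 2 * π * n : ℝ) * I) := by
  have hc : ((x - 2 * π * n : ℝ) : ℂ) * I ≠ 0 :=
    mul_ne_zero (ofReal_ne_zero.2 (sub_ne_zero.2 hxn)) I_ne_zero
  have hintegrand (t : ℝ) : fourier (-n) (t : AddCircle ((1 : ℝ) - 0)) • cexp (x * t * I) =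
      cexp ((x - 2 * π * n : ℝ) * I * t) := by
    rw [fourier_coe_apply, smul_eq_mul, ← Complex.exp_add]
    push_cast
    ring_nf
  simp only [fourierCoeffOn_eq_integral, hintegrand, integral_exp_mul_complex hc]
  simp

theorem stmt0 (x : ℝ) (hx : ∀ n : ℤ, x ≠ 2 * π * n) :
    HasSum (fun n : ℤ => 1 / (x - 2 * π * n) ^ 2) (1 / (2 * (1 - Real.cos x))) := by
  have hcos : 2 * (1 - Real.cos x) ≠ 0 := by
    refine mul_ne_zero two_ne_zero (sub_ne_zero.2 fun h => ?_)
    obtain ⟨n, hn⟩ := (Real.cos_eq_one_iff x).1 h.symm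
    exact hx n (by rw [← hn]; ring)
  have hcoeff (n : ℤ) : ‖fourierCoeffOn zero_lt_one (fun t : ℝ => cexp (x * t * I)) n‖ ^ 2 =
      2 * (1 - Real.cos x) * (1 / (x - 2 * π * n) ^ 2) := by
    have hperiod : Real.cos (x - 2 * π * n) = Real.cos x := by
      rw [mul_comm, Real.cos_sub_int_mul_two_pi]
    rw [fourierCoeffOn_exp_ofReal_mul_I x n (hx n), norm_div, div_pow,
      norm_exp_ofReal_mul_I_sub_one_sq, hperiod, norm_mul, norm_I, mul_one, norm_real,
      Real.norm_eq_abs, sq_abs, mul_one_div]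
  have hmass : ((1 : ℝ) - 0)⁻¹ • ∫ t in (0 : ℝ)..1, ‖cexp (x * t * I)‖ ^ 2 = 1 := by
    simp [Complex.norm_exp]
  have parseval := hasSum_sq_fourierCoeffOn zero_lt_one (memLp_exp_ofReal_mul_I x 2 0 1)
  simp only [hcoeff, hmass] at parseval
  rwa [← hasSum_mul_left_iff hcos, mul_one_div_cancel hcos]
end

section
/- With E as above, for η ∈ E and t ≥ 1 define η^{⊠t} := η ∘ ω_t where ω_t is the inverse of Φ_t(x) = x·exp((t−1)u(x)). Then η^{⊠t} ∈ E; that is, there exists a continuous non-increasing function u_t : (−∞,0) → ℝ with η^{⊠t}(x) = x·exp(−u_t(x)), and in fact u_t(Φ_t(x)) = t·u(x) for all x < 0. -/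
open Real Set

/-! Since `u` is non-increasing and `t ≥ 1`, `Φ_t` is strictly increasing on `(−∞,0)`, so its
inverse `ω_t` is monotone; a monotone map onto an open interval is continuous. Hence
`u_t := t · u ∘ ω_t` is continuous and non-increasing, and substituting
`x = ω_t(x) · exp((t−1) u(ω_t x))` gives `η(ω_t x) = x · exp(−u_t x)`. -/

theorem MonotoneOn.continuousOn_of_surjOn {α β : Type*} [LinearOrder α] [TopologicalSpace α]
    [OrderTopology α] [LinearOrder β] [TopologicalSpace β] [OrderTopology β] [DenselyOrdered β]
    {f : α → β} {s : Set α} {t : Set β} (hf : MonotoneOn f s) (hs : IsOpen s) (ht : IsOpen t)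
    (hmaps : MapsTo f s t) (hsurj : SurjOn f s t) : ContinuousOn f s := fun _ ha =>
  (continuousAt_of_monotoneOn_of_image_mem_nhds hf (hs.mem_nhds ha)
    (Filter.mem_of_superset (ht.mem_nhds (hmaps ha)) hsurj)).continuousWithinAt

theorem StrictMonoOn.monotoneOn_of_leftInvOn {α β : Type*} [LinearOrder α] [Preorder β]
    {f : α → β} {g : β → α} {s : Set β} {t : Set α} (hf : StrictMonoOn f t)
    (hg : MapsTo g s t) (hfg : LeftInvOn f g s) : MonotoneOn g s := fun _ ha _ hb hab =>
  (hf.le_iff_le (hg ha) (hg hb)).1 (by rwa [hfg ha, hfg hb])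

theorem strictMonoOn_mul_exp_mul_of_antitoneOn {u : ℝ → ℝ} {c : ℝ}
    (hu : AntitoneOn u (Iio 0)) (hc : 0 ≤ c) :
    StrictMonoOn (fun x => x * exp (c * u x)) (Iio 0) := by
  intro a (ha : a < 0) b hb hab
  have hexp : exp (c * u b) ≤ exp (c * u a) :=
    exp_le_exp.2 (mul_le_mul_of_nonneg_left (hu ha hb hab.le) hc)
  calc a * exp (c * u a) ≤ a * exp (c * u b) := mul_le_mul_of_nonpos_left hexp ha.le
    _ < b * exp (c * u b) := mul_lt_mul_of_pos_right hab (exp_pos _)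

theorem mul_exp_neg_eq_of_mul_exp_sub_one_mul {x y v t : ℝ} (h : y * exp ((t - 1) * v) = x) :
    y * exp (-v) = x * exp (-(t * v)) := by
  rw [← h, mul_assoc, ← exp_add]
  ring_nf

/-- for `η ∈ E` (with `η(x) = x·exp(−u(x))`, `u` continuous non-increasing) and
`t ≥ 1`, the map `η^{⊠t} = η ∘ ω_t` (where `ω_t` is the inverse of
`Φ_t(x) = x·exp((t−1)u(x))` on `(−∞,0)`) belongs to `E`; moreover `u_t(Φ_t(x)) = t·u(x)`. -/
theorem stmt11 (η u : ℝ → ℝ)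
    (hu : ContinuousOn u (Iio 0)) (humono : AntitoneOn u (Iio 0))
    (hη : ∀ x ∈ Iio (0:ℝ), η x = x * Real.exp (-u x))
    (t : ℝ) (ht : 1 ≤ t) (ω : ℝ → ℝ)
    (hmaps : ∀ x ∈ Iio (0:ℝ), ω x ∈ Iio (0:ℝ))
    (hinv1 : ∀ x ∈ Iio (0:ℝ), ω x * Real.exp ((t - 1) * u (ω x)) = x)
    (hinv2 : ∀ x ∈ Iio (0:ℝ), ω (x * Real.exp ((t - 1) * u x)) = x) :
    ∃ ut : ℝ → ℝ, ContinuousOn ut (Iio 0) ∧ AntitoneOn ut (Iio 0) ∧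
      (∀ x ∈ Iio (0:ℝ), η (ω x) = x * Real.exp (-ut x)) ∧
      (∀ x ∈ Iio (0:ℝ), ut (x * Real.exp ((t - 1) * u x)) = t * u x) := by
  have hΦ := strictMonoOn_mul_exp_mul_of_antitoneOn humono (sub_nonneg.2 ht)
  have hωmono : MonotoneOn ω (Iio 0) := hΦ.monotoneOn_of_leftInvOn hmaps hinv1
  have hωcont : ContinuousOn ω (Iio 0) :=
    hωmono.continuousOn_of_surjOn isOpen_Iio isOpen_Iio hmaps fun y hy =>
      ⟨_, mul_neg_of_neg_of_pos hy (exp_pos _), hinv2 y hy⟩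
  refine ⟨fun x => t * u (ω x), continuousOn_const.mul (hu.comp hωcont hmaps), ?_, ?_, ?_⟩
  · exact fun a ha b hb hab =>
      mul_le_mul_of_nonneg_left (humono (hmaps a ha) (hmaps b hb) (hωmono ha hb hab)) (by linarith)
  · intro x hx
    rw [hη _ (hmaps x hx)]
    exact mul_exp_neg_eq_of_mul_exp_sub_one_mul (hinv1 x hx)
  · intro x hx
    simp only [hinv2 x hx]
end

section
/- With E as above, for η ∈ E and t ≥ 1 the subordination function ω_t = Φ_t^{−1} satisfies ω_t(x) = η^{⊠t}(x)·( x / η^{⊠t}(x) )^{1/t} for all x < 0, where η^{⊠t} = η ∘ ω_t. -/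
open Real Set

/-- for `η ∈ E` and `t ≥ 1`, the subordination function `ω_t = Φ_t⁻¹` satisfies
`ω_t(x) = η^{⊠t}(x)·(x/η^{⊠t}(x))^{1/t}` for all `x < 0`, where `η^{⊠t} = η ∘ ω_t`. -/
theorem stmt12 (η u : ℝ → ℝ)
    (hu : ContinuousOn u (Iio 0)) (humono : AntitoneOn u (Iio 0))
    (hη : ∀ x ∈ Iio (0:ℝ), η x = x * Real.exp (-u x))
    (t : ℝ) (ht : 1 ≤ t) (ω : ℝ → ℝ)
    (hmaps : ∀ x ∈ Iio (0:ℝ), ω x ∈ Iio (0:ℝ))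
    (hinv1 : ∀ x ∈ Iio (0:ℝ), ω x * Real.exp ((t - 1) * u (ω x)) = x)
    (hinv2 : ∀ x ∈ Iio (0:ℝ), ω (x * Real.exp ((t - 1) * u x)) = x) :
    ∀ x ∈ Iio (0:ℝ), ω x = η (ω x) * (x / η (ω x)) ^ (1 / t) := by
  intro x hx
  have hy : ω x < 0 := hmaps x hx
  have h1 := hinv1 x hx
  have ht0 : t ≠ 0 := by linarith
  rw [hη (ω x) hy]
  generalize hydef : ω x = y at hy h1 ⊢
  have hne : y * Real.exp (-u y) ≠ 0 :=
    mul_ne_zero (ne_of_lt hy) (Real.exp_ne_zero _)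
  have hexp : Real.exp ((t - 1) * u y)
      = Real.exp (t * u y) * Real.exp (-u y) := by
    rw [← Real.exp_add]; ring_nf
  have hratio : x / (y * Real.exp (-u y)) = Real.exp (t * u y) := by
    rw [div_eq_iff hne, ← h1, hexp]; ring
  have hcan : t * u y * (1 / t) = u y := by field_simp
  rw [hratio, ← Real.exp_mul, hcan, mul_assoc, ← Real.exp_add, neg_add_cancel,
    Real.exp_zero, mul_one]
end

section
/- With E as above, define the Boolean power η^{⊎×s}(x) := x·exp(−s·u(x)) for s ≥ 0. Then for any η ∈ E, p ≥ 0 and q ≥ 1, the commutation relation (η^{⊎×p})^{⊠q} = (η^{⊠q'})^{⊎×p'} holds, where p' = pq/(1 − p + pq) and q' = 1 − p + pq (note p' ≥ 0 and q' ≥ 1). -/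
open Real Set

/-- commutation relation `(η^{⊎×p})^{⊠q} = (η^{⊠q'})^{⊎×p'}` for `η ∈ E`,
`p ≥ 0`, `q ≥ 1`, where `p' = pq/(1−p+pq)` and `q' = 1−p+pq`. Here `η^{⊎×s}(x) = x·exp(−s·u(x))`,
`ω₁` is the inverse of the `Φ_q`-map of `η^{⊎×p}` and `ω₂` the inverse of the `Φ_{q'}`-map
of `η`. -/
theorem stmt13 (η u : ℝ → ℝ)
    (hu : ContinuousOn u (Iio 0)) (humono : AntitoneOn u (Iio 0))
    (hη : ∀ x ∈ Iio (0:ℝ), η x = x * Real.exp (-u x))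
    (p q : ℝ) (hp : 0 ≤ p) (hq : 1 ≤ q)
    (ω₁ : ℝ → ℝ)
    (hmaps₁ : ∀ x ∈ Iio (0:ℝ), ω₁ x ∈ Iio (0:ℝ))
    (hinv₁ : ∀ x ∈ Iio (0:ℝ), ω₁ x * Real.exp ((q - 1) * (p * u (ω₁ x))) = x)
    (hinv₁' : ∀ x ∈ Iio (0:ℝ), ω₁ (x * Real.exp ((q - 1) * (p * u x))) = x)
    (ω₂ : ℝ → ℝ)
    (hmaps₂ : ∀ x ∈ Iio (0:ℝ), ω₂ x ∈ Iio (0:ℝ))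
    (hinv₂ : ∀ x ∈ Iio (0:ℝ), ω₂ x * Real.exp (((1 - p + p * q) - 1) * u (ω₂ x)) = x)
    (hinv₂' : ∀ x ∈ Iio (0:ℝ), ω₂ (x * Real.exp (((1 - p + p * q) - 1) * u x)) = x) :
    ∀ x ∈ Iio (0:ℝ),
      ω₁ x * Real.exp (-(p * u (ω₁ x))) =
        x * (η (ω₂ x) / x) ^ (p * q / (1 - p + p * q)) := by
  intro x hx
  have hq' : (0:ℝ) < 1 - p + p * q := by nlinarith
  have hω : ω₁ x = ω₂ x := by
    have h2 := hinv₂ x hx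
    have h1 := hinv₁' (ω₂ x) (hmaps₂ x hx)
    rw [show (q - 1) * (p * u (ω₂ x)) = ((1 - p + p * q) - 1) * u (ω₂ x) by ring,
      h2] at h1
    exact h1
  rw [hω]
  have hwlt : ω₂ x < 0 := hmaps₂ x hx
  have hxe := hinv₂ x hx
  set w := ω₂ x with hw
  have hxne : x ≠ 0 := ne_of_lt hx
  have hratio : η w / x = Real.exp (-(1 - p + p * q) * u w) := by
    rw [hη w hwlt, ← hxe,
      div_eq_iff (mul_ne_zero (ne_of_lt hwlt) (Real.exp_ne_zero _)),
      mul_comm (Real.exp _), mul_assoc, ← Real.exp_add]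
    congr 1
    ring
  rw [hratio, ← Real.exp_mul, ← hxe, mul_assoc, ← Real.exp_add]
  congr 1
  field_simp
  ring
end

section
/- With E as above, for η ∈ E and s, t ≥ 1 one has (η^{⊠s})^{⊠t} = η^{⊠st} and η^{⊠1} = η. -/
open Real Set

/-- `(η^{⊠s})^{⊠t} = η^{⊠st}` and `η^{⊠1} = η` for `η ∈ E`, `s,t ≥ 1`.
Here `ωs, ωst` are the inverses of `Φ_s, Φ_{st}` for `η`, and `ω'` is the inverse of the
`Φ_t`-map of `η^{⊠s} = η ∘ ωs`. -/
theorem stmt14 (η u : ℝ → ℝ)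
    (hu : ContinuousOn u (Iio 0)) (humono : AntitoneOn u (Iio 0))
    (hη : ∀ x ∈ Iio (0:ℝ), η x = x * Real.exp (-u x))
    (s t : ℝ) (hs : 1 ≤ s) (ht : 1 ≤ t)
    (ωs : ℝ → ℝ)
    (hmapss : ∀ x ∈ Iio (0:ℝ), ωs x ∈ Iio (0:ℝ))
    (hinvs : ∀ x ∈ Iio (0:ℝ), ωs x * Real.exp ((s - 1) * u (ωs x)) = x)
    (hinvs' : ∀ x ∈ Iio (0:ℝ), ωs (x * Real.exp ((s - 1) * u x)) = x)
    (ωst : ℝ → ℝ)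
    (hmapsst : ∀ x ∈ Iio (0:ℝ), ωst x ∈ Iio (0:ℝ))
    (hinvst : ∀ x ∈ Iio (0:ℝ), ωst x * Real.exp ((s * t - 1) * u (ωst x)) = x)
    (hinvst' : ∀ x ∈ Iio (0:ℝ), ωst (x * Real.exp ((s * t - 1) * u x)) = x)
    (ω' : ℝ → ℝ)
    (hmaps' : ∀ x ∈ Iio (0:ℝ), ω' x ∈ Iio (0:ℝ))
    (hinv' : ∀ x ∈ Iio (0:ℝ), ω' x * (ω' x / η (ωs (ω' x))) ^ (t - 1) = x)
    (hinv'' : ∀ x ∈ Iio (0:ℝ), ω' (x * (x / η (ωs x)) ^ (t - 1)) = x) :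
    (∀ x ∈ Iio (0:ℝ), η (ωs (ω' x)) = η (ωst x)) ∧
    (∀ ω₁ : ℝ → ℝ, (∀ x ∈ Iio (0:ℝ), ω₁ x ∈ Iio (0:ℝ)) →
      (∀ x ∈ Iio (0:ℝ), ω₁ x * Real.exp (((1:ℝ) - 1) * u (ω₁ x)) = x) →
      ∀ x ∈ Iio (0:ℝ), η (ω₁ x) = η x) := by

  constructor
  · intro x hx
    set y := ωst x with hy
    have hy0 : y ∈ Iio (0:ℝ) := hmapsst x hx
    have hz0 : y * Real.exp ((s - 1) * u y) ∈ Iio (0:ℝ) := by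
      have : y < 0 := hy0
      exact mul_neg_of_neg_of_pos this (Real.exp_pos _)
    set z := y * Real.exp ((s - 1) * u y) with hz
    have hωsz : ωs z = y := hinvs' y hy0
    have hηy : η y = y * Real.exp (-u y) := hη y hy0
    have hratio : z / η (ωs z) = Real.exp (s * u y) := by
      rw [hωsz, hηy, hz]
      have hyne : y ≠ 0 := ne_of_lt hy0
      field_simp
      have h2 : Real.exp ((s - 1) * u y) = Real.exp (s * u y) * Real.exp (-u y) := by
        rw [← Real.exp_add]; ring_nf
      rw [h2]; ring
    have hpow : (z / η (ωs z)) ^ (t - 1) = Real.exp (s * u y * (t - 1)) := by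
      rw [hratio, ← Real.exp_log (Real.exp_pos (s * u y)), Real.log_exp,
        ← Real.exp_mul]
    have hzx : z * (z / η (ωs z)) ^ (t - 1) = x := by
      rw [hpow, hz, mul_assoc, ← Real.exp_add]
      have : (s - 1) * u y + s * u y * (t - 1) = (s * t - 1) * u y := by ring
      rw [this]
      exact hinvst x hx
    have hω'x : ω' x = z := by
      have := hinv'' z hz0
      rw [hzx] at this
      exact this
    rw [hω'x, hωsz]
  · intro ω₁ hmap hinv x hx
    have h := hinv x hx
    simp only [sub_self, zero_mul, Real.exp_zero, mul_one] at h
    rw [h]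
end

section
/- Define, for η ∈ E, M(η) := (η^{⊠2})^{⊎×(1/2)}. Then the family ξ_t := (η^{⊠(1+t)})^{⊎×(t/(1+t))} (t ≥ 0) satisfies ξ_0 = Id, ξ_1 = M(η), and ξ_t^{⊠s} = ξ_{st} for all s ≥ 1, t > 0. -/
open Real Set

lemma xi_key (η u : ℝ → ℝ)
    (hη : ∀ x ∈ Iio (0:ℝ), η x = x * Real.exp (-u x))
    (ω : ℝ → ℝ → ℝ)
    (hmaps : ∀ r : ℝ, 1 ≤ r → ∀ x ∈ Iio (0:ℝ), ω r x ∈ Iio (0:ℝ))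
    (hinv1 : ∀ r : ℝ, 1 ≤ r → ∀ x ∈ Iio (0:ℝ), ω r x * Real.exp ((r - 1) * u (ω r x)) = x)
    (t : ℝ) (ht : 0 ≤ t) (x : ℝ) (hx : x ∈ Iio (0:ℝ)) :
    x * (η (ω (1 + t) x) / x) ^ (t / (1 + t)) = ω (1 + t) x := by
  have h1t : (1:ℝ) ≤ 1 + t := by linarith
  have h1t0 : (0:ℝ) < 1 + t := by linarith
  have hw : ω (1 + t) x ∈ Iio (0:ℝ) := hmaps _ h1t x hx
  set w := ω (1 + t) x with hwdef
  have hwx : w * Real.exp (t * u w) = x := by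
    have := hinv1 _ h1t x hx
    rwa [show (1 + t - 1) = t by ring] at this
  have hwne : w ≠ 0 := ne_of_lt hw
  have hηw : η w = w * Real.exp (-u w) := hη w hw
  have hratio : η w / x = Real.exp (-((1 + t) * u w)) := by
    rw [hηw, ← hwx, mul_div_mul_left _ _ hwne, ← Real.exp_sub]
    congr 1
    ring
  rw [hratio, ← Real.exp_mul, ← hwx, mul_assoc, ← Real.exp_add]
  have : t * u w + -((1 + t) * u w) * (t / (1 + t)) = 0 := by
    field_simp
    ring
  rw [this, Real.exp_zero, mul_one]

/-- with `M(η) := (η^{⊠2})^{⊎×(1/2)}`, the family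
`ξ_t := (η^{⊠(1+t)})^{⊎×(t/(1+t))}` satisfies `ξ_0 = Id`, `ξ_1 = M(η)` and
`ξ_t^{⊠s} = ξ_{st}` for all `s ≥ 1`, `t > 0`. Here `ω r` denotes the inverse on `(−∞,0)`
of `Φ_r(x) = x·exp((r−1)u(x))` for `η`, so that `η^{⊠r} = η ∘ ω r`, and
`ξ_t(x) = x·(η(ω(1+t)(x))/x)^{t/(1+t)}`. -/
theorem stmt15 (η u : ℝ → ℝ)
    (hu : ContinuousOn u (Iio 0)) (humono : AntitoneOn u (Iio 0))
    (hη : ∀ x ∈ Iio (0:ℝ), η x = x * Real.exp (-u x))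
    (ω : ℝ → ℝ → ℝ)
    (hmaps : ∀ r : ℝ, 1 ≤ r → ∀ x ∈ Iio (0:ℝ), ω r x ∈ Iio (0:ℝ))
    (hinv1 : ∀ r : ℝ, 1 ≤ r → ∀ x ∈ Iio (0:ℝ), ω r x * Real.exp ((r - 1) * u (ω r x)) = x)
    (hinv2 : ∀ r : ℝ, 1 ≤ r → ∀ x ∈ Iio (0:ℝ), ω r (x * Real.exp ((r - 1) * u x)) = x) :
    (∀ x ∈ Iio (0:ℝ), x * (η (ω (1 + 0) x) / x) ^ ((0:ℝ) / (1 + 0)) = x) ∧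
    (∀ x ∈ Iio (0:ℝ),
      x * (η (ω (1 + 1) x) / x) ^ ((1:ℝ) / (1 + 1)) = x * (η (ω 2 x) / x) ^ ((1:ℝ) / 2)) ∧
    (∀ s t : ℝ, 1 ≤ s → 0 < t → ∀ ω' : ℝ → ℝ,
      (∀ x ∈ Iio (0:ℝ), ω' x ∈ Iio (0:ℝ)) →
      (∀ x ∈ Iio (0:ℝ),
        ω' x * (ω' x / (ω' x * (η (ω (1 + t) (ω' x)) / ω' x) ^ (t / (1 + t)))) ^ (s - 1) = x) →
      (∀ x ∈ Iio (0:ℝ),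
        ω' (x * (x / (x * (η (ω (1 + t) x) / x) ^ (t / (1 + t)))) ^ (s - 1)) = x) →
      ∀ x ∈ Iio (0:ℝ),
        ω' x * (η (ω (1 + t) (ω' x)) / ω' x) ^ (t / (1 + t)) =
          x * (η (ω (1 + s * t) x) / x) ^ ((s * t) / (1 + s * t))) := by
  refine ⟨?_, ?_, ?_⟩
  · intro x hx
    norm_num
  · intro x hx
    norm_num
  · intro s t hs ht ω' hmaps' hA hB x hx
    have hy : ω' x ∈ Iio (0:ℝ) := hmaps' x hx
    set y := ω' x with hydef
    -- LHS = ω (1+t) y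
    have hL : y * (η (ω (1 + t) y) / y) ^ (t / (1 + t)) = ω (1 + t) y :=
      xi_key η u hη ω hmaps hinv1 t ht.le y hy
    have hst : 0 ≤ s * t := by positivity
    have hR : x * (η (ω (1 + s * t) x) / x) ^ ((s * t) / (1 + s * t)) = ω (1 + s * t) x :=
      xi_key η u hη ω hmaps hinv1 (s * t) hst x hx
    rw [hL, hR]
    -- now show ω (1+t) y = ω (1+st) x
    have h1t : (1:ℝ) ≤ 1 + t := by linarith
    have hw : ω (1 + t) y ∈ Iio (0:ℝ) := hmaps _ h1t y hy
    set w := ω (1 + t) y with hwdef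
    have hwne : w ≠ 0 := ne_of_lt hw
    have hwy : w * Real.exp (t * u w) = y := by
      have := hinv1 _ h1t y hy
      rwa [show (1 + t - 1) = t by ring] at this
    have hAx : y * (y / w) ^ (s - 1) = x := by
      have := hA x hx
      rwa [← hydef, hL] at this
    have hxw : w * Real.exp ((1 + s * t - 1) * u w) = x := by
      rw [show (1 + s * t - 1) = s * t by ring]
      have hyw : y / w = Real.exp (t * u w) := by
        rw [← hwy, mul_div_cancel_left₀ _ hwne]
      rw [← hAx, hyw, ← hwy, ← Real.exp_mul, mul_assoc w, ← Real.exp_add]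
      congr 1
      ring
    have h1st : (1:ℝ) ≤ 1 + s * t := by nlinarith
    have := hinv2 _ h1st w hw
    rw [hxw] at this
    rw [this]
end

section
/- Embedding into a ⊠-convolution semigroup is unique within E: if (η_t)_{t≥0} and (η'_t)_{t≥0} are two families in E with η_0 = η'_0 = Id, η_1 = η'_1 = η, and η_t^{⊠s} = η_{st}, η'_t{}^{⊠s} = η'_{st} for all s ≥ 1, t ≥ 0, then η_t = η'_t for all t ≥ 0. -/
open Real Set

/-- Surjectivity onto `Iio 0` of `x ↦ x * exp (v x * k)` for `v` continuous antitone, `k ≥ 0`. -/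
lemma aux_surj (v : ℝ → ℝ) (hc : ContinuousOn v (Iio 0))
    (ha : AntitoneOn v (Iio 0)) (k : ℝ) (hk : 0 ≤ k) :
    ∀ y ∈ Iio (0:ℝ), ∃ x ∈ Iio (0:ℝ), x * Real.exp (v x * k) = y := by
  intro y hy
  have hy0 : y < 0 := hy
  set C : ℝ := Real.exp (v (-1) * k) with hC
  have hCpos : 0 < C := Real.exp_pos _
  set b : ℝ := max (-1) (y / (2 * C)) with hbdef
  set a : ℝ := min (-1) ((y - 1) / C) with hadef
  have hb0 : b < 0 := max_lt (by norm_num) (div_neg_of_neg_of_pos hy0 (by positivity))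
  have ha1 : a ≤ -1 := min_le_left _ _
  have hab : a ≤ b := le_trans ha1 (le_max_left _ _)
  have ha0 : a < 0 := lt_of_le_of_lt ha1 (by norm_num)
  have hsub : Icc a b ⊆ Iio (0:ℝ) := fun z hz => lt_of_le_of_lt hz.2 hb0
  set f : ℝ → ℝ := fun x => x * Real.exp (v x * k) with hfdef
  have hcont : ContinuousOn f (Icc a b) := by
    apply ContinuousOn.mul continuousOn_id
    exact (Real.continuous_exp.comp_continuousOn ((hc.mono hsub).mul continuousOn_const))
  have hm1 : (-1 : ℝ) ∈ Iio (0:ℝ) := by norm_num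
  -- f a ≤ y
  have hfa : f a ≤ y := by
    have hva : v (-1) ≤ v a := ha (hsub ⟨le_refl a, hab⟩) hm1 ha1
    have h1 : C ≤ Real.exp (v a * k) :=
      Real.exp_le_exp.mpr (mul_le_mul_of_nonneg_right hva hk)
    have h2 : a * Real.exp (v a * k) ≤ a * C := by
      nlinarith [Real.exp_pos (v a * k)]
    have h3 : a * C ≤ y - 1 := by
      have := min_le_right (-1 : ℝ) ((y - 1) / C)
      calc a * C ≤ ((y - 1) / C) * C := by nlinarith
        _ = y - 1 := by field_simp
    calc f a ≤ a * C := h2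
      _ ≤ y - 1 := h3
      _ ≤ y := by linarith
  -- y ≤ f b
  have hfb : y ≤ f b := by
    have hvb : v b ≤ v (-1) := ha hm1 (hsub ⟨hab, le_refl b⟩) (le_max_left _ _)
    have h1 : Real.exp (v b * k) ≤ C :=
      Real.exp_le_exp.mpr (mul_le_mul_of_nonneg_right hvb hk)
    have h2 : b * C ≤ b * Real.exp (v b * k) := by
      nlinarith [Real.exp_pos (v b * k)]
    have h3 : y / 2 ≤ b * C := by
      have hb2 : y / (2 * C) ≤ b := le_max_right _ _
      have : y / (2 * C) * C = y / 2 := by field_simp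
      nlinarith
    have : y ≤ y / 2 := by linarith
    calc y ≤ y / 2 := this
      _ ≤ b * C := h3
      _ ≤ f b := h2
  have hy' : y ∈ Icc (f a) (f b) := ⟨hfa, hfb⟩
  obtain ⟨x, hx, hfx⟩ := intermediate_value_Icc hab hcont hy'
  exact ⟨x, hsub hx, hfx⟩

/-- rewriting `x * (x / (x * exp (-u)))^(s-1)` as `x * exp (u * (s-1))`. -/
lemma aux_phi (u : ℝ) {x : ℝ} (hx : x < 0) (s : ℝ) :
    x * (x / (x * Real.exp (-u))) ^ (s - 1) = x * Real.exp (u * (s - 1)) := by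
  have hx0 : x ≠ 0 := ne_of_lt hx
  have h1 : x / (x * Real.exp (-u)) = Real.exp u := by
    rw [div_eq_iff (mul_ne_zero hx0 (Real.exp_ne_zero _))]
    rw [mul_comm x (Real.exp (-u)), ← mul_assoc, ← Real.exp_add]
    simp
  rw [h1, Real.rpow_def_of_pos (Real.exp_pos u), Real.log_exp]

/-- uniqueness of the embedding of `η ∈ E` into a `⊠`-convolution semigroup.
The semigroup property `η_t^{⊠s} = η_{st}` is expressed without inverse functions as
`η_{st}(Φ^{(t)}_s(x)) = η_t(x)` with `Φ^{(t)}_s(x) = x·(x/η_t(x))^{s−1}`. -/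
theorem stmt16 (η : ℝ → ℝ)
    (ηf ηf' : ℝ → ℝ → ℝ) (uf uf' : ℝ → ℝ → ℝ)
    (hE : ∀ t : ℝ, 0 ≤ t → ContinuousOn (uf t) (Iio 0) ∧ AntitoneOn (uf t) (Iio 0) ∧
      ∀ x ∈ Iio (0:ℝ), ηf t x = x * Real.exp (-(uf t x)))
    (hE' : ∀ t : ℝ, 0 ≤ t → ContinuousOn (uf' t) (Iio 0) ∧ AntitoneOn (uf' t) (Iio 0) ∧
      ∀ x ∈ Iio (0:ℝ), ηf' t x = x * Real.exp (-(uf' t x)))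
    (h0 : ∀ x ∈ Iio (0:ℝ), ηf 0 x = x)
    (h0' : ∀ x ∈ Iio (0:ℝ), ηf' 0 x = x)
    (h1 : ∀ x ∈ Iio (0:ℝ), ηf 1 x = η x)
    (h1' : ∀ x ∈ Iio (0:ℝ), ηf' 1 x = η x)
    (hsg : ∀ s t : ℝ, 1 ≤ s → 0 ≤ t →
      ∀ x ∈ Iio (0:ℝ), ηf (s * t) (x * (x / ηf t x) ^ (s - 1)) = ηf t x)
    (hsg' : ∀ s t : ℝ, 1 ≤ s → 0 ≤ t →
      ∀ x ∈ Iio (0:ℝ), ηf' (s * t) (x * (x / ηf' t x) ^ (s - 1)) = ηf' t x) :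
    ∀ t : ℝ, 0 ≤ t → ∀ x ∈ Iio (0:ℝ), ηf t x = ηf' t x := by
  intro t ht x₀ hx₀
  have hx₀0 : x₀ < 0 := hx₀
  rcases eq_or_lt_of_le ht with h0t | h0t
  · -- t = 0
    rw [← h0t, h0 x₀ hx₀, h0' x₀ hx₀]
  obtain ⟨hcu, hau, hfu⟩ := hE t ht
  obtain ⟨hcu', hau', hfu'⟩ := hE' t ht
  by_cases hle : t ≤ 1
  · -- 0 < t ≤ 1 : use the relation η_t^{⊠ 1/t} = η₁ = η for both families
    have hs1 : 1 ≤ 1 / t := by rw [le_div_iff₀ h0t]; linarith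
    have hst : (1 / t) * t = 1 := one_div_mul_cancel (ne_of_gt h0t)
    have hspos : (0:ℝ) < 1 / t := by positivity
    -- equation A for the unprimed family at x₀
    have eA := hsg (1 / t) t hs1 ht x₀ hx₀
    rw [hst, hfu x₀ hx₀, aux_phi (uf t x₀) hx₀0 (1 / t)] at eA
    set p : ℝ := x₀ * Real.exp (uf t x₀ * (1 / t - 1)) with hpdef
    have hp : p ∈ Iio (0:ℝ) := mul_neg_of_neg_of_pos hx₀0 (Real.exp_pos _)
    rw [h1 p hp] at eA
    -- eA : η p = x₀ * exp (-(uf t x₀))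
    -- surjectivity for the primed family: find x₁ with Φ'_t x₁ = p
    obtain ⟨x₁, hx₁, hphi⟩ := aux_surj (uf' t) hcu' hau' (1 / t - 1) (by linarith) p hp
    have hx₁0 : x₁ < 0 := hx₁
    -- equation B for the primed family at x₁
    have eB := hsg' (1 / t) t hs1 ht x₁ hx₁
    rw [hst, hfu' x₁ hx₁, aux_phi (uf' t x₁) hx₁0 (1 / t), hphi, h1' p hp] at eB
    -- eB : η p = x₁ * exp (-(uf' t x₁))
    set a : ℝ := uf t x₀ with hadef
    set b : ℝ := uf' t x₁ with hbdef
    have eq1 : x₀ * Real.exp (-a) = x₁ * Real.exp (-b) := eA.symm.trans eB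
    have eq2 : x₀ * Real.exp (a * (1 / t - 1)) = x₁ * Real.exp (b * (1 / t - 1)) := by
      rw [hphi]
    have hx₀ne : x₀ ≠ 0 := ne_of_lt hx₀0
    have hx₁ne : x₁ ≠ 0 := ne_of_lt hx₁0
    -- cross-multiply the two equations and cancel x₀ * x₁
    have h5 : x₀ * Real.exp (a * (1 / t - 1)) * (x₁ * Real.exp (-b))
        = x₁ * Real.exp (b * (1 / t - 1)) * (x₀ * Real.exp (-a)) := by
      rw [eq2, ← eq1]
    have h6 : (x₀ * x₁) * (Real.exp (a * (1 / t - 1)) * Real.exp (-b))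
        = (x₀ * x₁) * (Real.exp (b * (1 / t - 1)) * Real.exp (-a)) := by
      linear_combination h5
    have h7 : Real.exp (a * (1 / t - 1)) * Real.exp (-b)
        = Real.exp (b * (1 / t - 1)) * Real.exp (-a) :=
      mul_left_cancel₀ (mul_ne_zero hx₀ne hx₁ne) h6
    rw [← Real.exp_add, ← Real.exp_add] at h7
    have h8 : a * (1 / t - 1) + -b = b * (1 / t - 1) + -a := Real.exp_injective h7
    have hab : a = b := by
      have h9 : a * (1 / t) = b * (1 / t) := by ring_nf at h8 ⊢; linarith
      exact mul_right_cancel₀ (ne_of_gt hspos) h9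
    have hx01 : x₀ = x₁ := by
      rw [hab] at eq1
      exact mul_right_cancel₀ (Real.exp_ne_zero _) eq1
    have hu : uf t x₀ = uf' t x₀ := by rw [← hadef, hab, hbdef, ← hx01]
    rw [hfu x₀ hx₀, hfu' x₀ hx₀, hu]
  · -- t > 1 : use the relation η₁^{⊠ t} = η_t for both families
    have ht1 : 1 ≤ t := le_of_lt (lt_of_not_ge hle)
    obtain ⟨hcu1, hau1, hfu1⟩ := hE 1 zero_le_one
    obtain ⟨hcu1', hau1', hfu1'⟩ := hE' 1 zero_le_one
    have hueq : ∀ z ∈ Iio (0:ℝ), uf 1 z = uf' 1 z := by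
      intro z hz
      have hz0 : z < 0 := hz
      have e1 : z * Real.exp (-(uf 1 z)) = z * Real.exp (-(uf' 1 z)) := by
        rw [← hfu1 z hz, ← hfu1' z hz, h1 z hz, h1' z hz]
      have e2 := mul_left_cancel₀ (ne_of_lt hz0) e1
      have e3 := Real.exp_injective e2
      linarith
    obtain ⟨x, hx, hphi⟩ := aux_surj (uf 1) hcu1 hau1 (t - 1) (by linarith) x₀ hx₀
    have hx0 : x < 0 := hx
    have eA := hsg t 1 ht1 zero_le_one x hx
    rw [mul_one, hfu1 x hx, aux_phi (uf 1 x) hx0 t, hphi] at eA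
    have eB := hsg' t 1 ht1 zero_le_one x hx
    rw [mul_one, hfu1' x hx, ← hueq x hx, aux_phi (uf 1 x) hx0 t, hphi] at eB
    exact eA.trans eB.symm
end
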